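/- Let d be a positive integer and let P be a probability measure on ℝ^d that is absolutely continuous with respect to Lebesgue measure with density p, has finite second moment ∫‖x‖² dP(x) < ∞, finite differential-entropy integral ∫ p(x)|log p(x)| dx < ∞, mean μ = ∫ x dP(x), and symmetric positive-definite covariance matrix Σ = ∫ (x − μ)(x − μ)ᵀ dP(x). Let μ̂ ∈ ℝ^d and let Σ̂ be a d×d symmetric positive-definite matrix with smallest eigenvalue λ̂_min. Let Q₀ = N(0, I_d) and Q̂ = N(μ̂, Σ̂) be the corresponding Gaussian measures on ℝ^d. If (1/λ̂_min)·(‖μ − μ̂‖₂² + ‖Σ − Σ̂‖_N) + √d·‖Σ − Σ̂‖_F ≤ ‖μ‖₂², then D_KL(P ‖ Q̂) ≤ D_KL(P ‖ Q₀). -/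

import Mathlib

open MeasureTheory Matrix Real

/-- The density of the Gaussian measure `N(m, S)` on `ℝ^d` (w.r.t. Lebesgue
measure), for a symmetric positive-definite `S`:
`q_{m,S}(x) = (2π)^{−d/2} (det S)^{−1/2} exp(−(x − m)ᵀ S⁻¹ (x − m)/2)`. -/
noncomputable def gaussDensity {d : ℕ} (m : Fin d → ℝ)
    (S : Matrix (Fin d) (Fin d) ℝ) (x : Fin d → ℝ) : ℝ :=
  (2 * π) ^ (-(d : ℝ) / 2) * S.det ^ (-(1 : ℝ) / 2) *
    Real.exp (-((x - m) ⬝ᵥ (S⁻¹ *ᵥ (x - m))) / 2)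

/-- The Gaussian measure `N(m, S)` on `ℝ^d`: the measure whose density w.r.t.
Lebesgue measure is `gaussDensity m S`. -/
noncomputable def gaussMeasure {d : ℕ} (m : Fin d → ℝ)
    (S : Matrix (Fin d) (Fin d) ℝ) : Measure (Fin d → ℝ) :=
  volume.withDensity fun x => ENNReal.ofReal (gaussDensity m S x)

/-- The Kullback–Leibler divergence `D_KL(P ‖ Q) = ∫ log(dP/dQ) dP` of a measure
`P` with Lebesgue density `p` against the Gaussian `N(m, S)`, expressed through
the density ratio `dP/dQ = p / q_{m,S}`. -/
noncomputable def klDivGauss {d : ℕ} (P : Measure (Fin d → ℝ))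
    (p : (Fin d → ℝ) → ℝ) (m : Fin d → ℝ) (S : Matrix (Fin d) (Fin d) ℝ) : ℝ :=
  ∫ x, Real.log (p x / gaussDensity m S x) ∂P

/-!
Since `log q_{m,S}` is a quadratic polynomial, only the first two moments of `P` enter:
`D_KL(P ‖ N(m, S)) = ∫ log p dP + (d/2) log 2π + F(m, S)/2` with
`F(m, S) = log det S + tr(S⁻¹Σ) + (μ - m)ᵀ S⁻¹ (μ - m)`, and `F(0, I) = tr Σ + ‖μ‖²`.
With `Δ = Σ - Σ̂` and `λ̂ = λ̂_min`: `log det Σ̂ ≤ tr Σ̂ - d` (from `log t ≤ t - 1` on the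
eigenvalues), `tr(Σ̂⁻¹Σ) = d + tr(Σ̂⁻¹Δ) ≤ d + ‖Δ‖_N / λ̂` (expand `Δ` in its eigenbasis),
`(μ - μ̂)ᵀ Σ̂⁻¹ (μ - μ̂) ≤ ‖μ - μ̂‖² / λ̂` and `-tr Δ ≤ √d ‖Δ‖_F` (Cauchy–Schwarz on the
diagonal). Adding these to the hypothesis gives `F(μ̂, Σ̂) ≤ F(0, I)`.
-/

namespace Matrix

variable {n : Type*} [Fintype n]

lemma mulVec_dotProduct_mulVec_mulVec (U B : Matrix n n ℝ) (y : n → ℝ) :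
    (U *ᵥ y) ⬝ᵥ B *ᵥ (U *ᵥ y) = y ⬝ᵥ (Uᵀ * B * U) *ᵥ y := by
  rw [← mulVec_mulVec, ← mulVec_mulVec, dotProduct_mulVec y Uᵀ, vecMul_transpose]

lemma abs_trace_le_sqrt_card_mul_sqrt_sum_sq (A : Matrix n n ℝ) :
    |A.trace| ≤ √(Fintype.card n) * √(∑ i, ∑ j, A i j ^ 2) := by
  rw [← Real.sqrt_mul (Nat.cast_nonneg _)]
  refine Real.abs_le_sqrt ?_
  calc A.trace ^ 2 ≤ Fintype.card n * ∑ i, A i i ^ 2 := by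
        simpa [trace] using sq_sum_le_card_mul_sum_sq (s := Finset.univ) (f := A.diag)
    _ ≤ Fintype.card n * ∑ i, ∑ j, A i j ^ 2 := by
        gcongr with i
        exact Finset.single_le_sum (fun j _ => sq_nonneg (A i j)) (Finset.mem_univ i)

variable [DecidableEq n]

namespace IsHermitian

variable {A : Matrix n n ℝ} (hA : A.IsHermitian)

local notation "U" => (hA.eigenvectorUnitary : Matrix n n ℝ)

lemma transpose_eigenvectorUnitary_mul_self : Uᵀ * U = 1 := by
  simpa [star_eq_conjTranspose] using Unitary.coe_star_mul_self hA.eigenvectorUnitary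

lemma eigenvectorUnitary_mul_transpose_self : U * Uᵀ = 1 := by
  simpa [star_eq_conjTranspose] using Unitary.coe_mul_star_self hA.eigenvectorUnitary

lemma transpose_eigenvectorUnitary_mul_mul : Uᵀ * A * U = diagonal hA.eigenvalues := by
  simpa [Unitary.conjStarAlgAut_star_apply, star_eq_conjTranspose] using
    hA.conjStarAlgAut_star_eigenvectorUnitary

lemma eigenvectorUnitary_mulVec_dotProduct_self (y : n → ℝ) :
    (U *ᵥ y) ⬝ᵥ (U *ᵥ y) = y ⬝ᵥ y := by
  simpa [hA.transpose_eigenvectorUnitary_mul_self] using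
    mulVec_dotProduct_mulVec_mulVec U 1 y

lemma iInf_eigenvalues_mul_dotProduct_self_le (x : n → ℝ) :
    (⨅ i, hA.eigenvalues i) * (x ⬝ᵥ x) ≤ x ⬝ᵥ A *ᵥ x := by
  obtain ⟨y, rfl⟩ : ∃ y, U *ᵥ y = x :=
    ⟨Uᵀ *ᵥ x, by rw [mulVec_mulVec, hA.eigenvectorUnitary_mul_transpose_self, one_mulVec]⟩
  rw [hA.eigenvectorUnitary_mulVec_dotProduct_self, mulVec_dotProduct_mulVec_mulVec,
    hA.transpose_eigenvectorUnitary_mul_mul]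
  simp only [dotProduct, mulVec_diagonal, Finset.mul_sum]
  refine Finset.sum_le_sum fun i _ => ?_
  have := ciInf_le (Finite.bddBelow_range hA.eigenvalues) i
  nlinarith [mul_self_nonneg (y i)]

lemma trace_mul_eq_sum (B : Matrix n n ℝ) :
    (B * A).trace = ∑ i, hA.eigenvalues i * (Uᵀ * B * U) i i := by
  have hA' : A = U * diagonal hA.eigenvalues * Uᵀ := by
    rw [← hA.transpose_eigenvectorUnitary_mul_mul, ← mul_assoc, ← mul_assoc,
      hA.eigenvectorUnitary_mul_transpose_self, one_mul, mul_assoc,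
      hA.eigenvectorUnitary_mul_transpose_self, mul_one]
  conv_lhs => rw [hA', ← mul_assoc, ← mul_assoc, trace_mul_comm, ← mul_assoc, ← mul_assoc]
  simp [trace, mul_diagonal, mul_comm]

end IsHermitian

namespace PosDef

variable {M : Matrix n n ℝ}

lemma iInf_eigenvalues_pos [Nonempty n] (hM : M.PosDef) : 0 < ⨅ i, hM.1.eigenvalues i := by
  obtain ⟨i, hi⟩ := exists_eq_ciInf_of_finite (f := hM.1.eigenvalues)
  exact hi ▸ hM.eigenvalues_pos i

lemma dotProduct_inv_mulVec_le (hM : M.PosDef) (x : n → ℝ) :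
    x ⬝ᵥ M⁻¹ *ᵥ x ≤ (⨅ i, hM.1.eigenvalues i)⁻¹ * (x ⬝ᵥ x) := by
  cases isEmpty_or_nonempty n
  · simp [dotProduct]
  set c := ⨅ i, hM.1.eigenvalues i
  have hc : 0 < c := hM.iInf_eigenvalues_pos
  set y := M⁻¹ *ᵥ x
  have hMy : M *ᵥ y = x := by
    rw [mulVec_mulVec, mul_nonsing_inv _ (isUnit_iff_ne_zero.mpr hM.det_pos.ne'), one_mulVec]
  have hlow : c * (y ⬝ᵥ y) ≤ x ⬝ᵥ y := by
    simpa [hMy, dotProduct_comm] using hM.1.iInf_eigenvalues_mul_dotProduct_self_le y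
  -- AM-GM: `2 x ⬝ᵥ y ≤ c (y ⬝ᵥ y) + c⁻¹ (x ⬝ᵥ x)`
  have hamgm : 0 ≤ c * ((y - c⁻¹ • x) ⬝ᵥ (y - c⁻¹ • x)) :=
    mul_nonneg hc.le (dotProduct_self_star_nonneg _)
  simp only [dotProduct_sub, sub_dotProduct, dotProduct_smul, smul_dotProduct, smul_eq_mul,
    dotProduct_comm y x] at hamgm
  field_simp at hamgm ⊢
  nlinarith

lemma trace_inv_mul_le (hM : M.PosDef) {A : Matrix n n ℝ} (hA : A.IsHermitian) :
    (M⁻¹ * A).trace ≤ (⨅ i, hM.1.eigenvalues i)⁻¹ * ∑ i, |hA.eigenvalues i| := by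
  rw [hA.trace_mul_eq_sum, Finset.mul_sum]
  refine Finset.sum_le_sum fun i _ => ?_
  set u := (hA.eigenvectorUnitary : Matrix n n ℝ) *ᵥ Pi.single i 1
  have hdiag : ((hA.eigenvectorUnitary : Matrix n n ℝ)ᵀ * M⁻¹ * hA.eigenvectorUnitary) i i =
      u ⬝ᵥ M⁻¹ *ᵥ u := by
    rw [mulVec_dotProduct_mulVec_mulVec]
    simp
  have hu : u ⬝ᵥ u = 1 := by
    rw [hA.eigenvectorUnitary_mulVec_dotProduct_self]
    simp
  have h0 : 0 ≤ u ⬝ᵥ M⁻¹ *ᵥ u := by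
    simpa using hM.inv.posSemidef.dotProduct_mulVec_nonneg u
  have h1 : u ⬝ᵥ M⁻¹ *ᵥ u ≤ (⨅ i, hM.1.eigenvalues i)⁻¹ := by
    simpa [hu] using hM.dotProduct_inv_mulVec_le u
  rw [hdiag, mul_comm _ |_|]
  exact mul_le_mul (le_abs_self _) h1 h0 (abs_nonneg _)

lemma log_det_le_trace_sub_card (hM : M.PosDef) : log M.det ≤ M.trace - Fintype.card n := by
  rw [hM.1.det_eq_prod_eigenvalues, hM.1.trace_eq_sum_eigenvalues]
  simp only [RCLike.ofReal_real_eq_id, id]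
  rw [Real.log_prod fun i _ => (hM.eigenvalues_pos i).ne']
  calc ∑ i, log (hM.1.eigenvalues i) ≤ ∑ i, (hM.1.eigenvalues i - 1) :=
        Finset.sum_le_sum fun i _ => log_le_sub_one_of_pos (hM.eigenvalues_pos i)
    _ = _ := by simp [Finset.sum_sub_distrib]

end PosDef

theorem log_det_add_trace_inv_mul_add_le {Sig SigHat : Matrix n n ℝ} (hSigHat : SigHat.PosDef)
    (hΔ : (Sig - SigHat).IsHermitian) (mu muHat : n → ℝ)
    (hcond : (⨅ i, hSigHat.1.eigenvalues i)⁻¹ *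
        ((∑ i, (mu i - muHat i) ^ 2) + ∑ i, |hΔ.eigenvalues i|) +
        √(Fintype.card n) * √(∑ i, ∑ j, (Sig i j - SigHat i j) ^ 2) ≤ ∑ i, mu i ^ 2) :
    log SigHat.det + (SigHat⁻¹ * Sig).trace +
      (mu - muHat) ⬝ᵥ SigHat⁻¹ *ᵥ (mu - muHat) ≤ Sig.trace + mu ⬝ᵥ mu := by
  have hlogdet := hSigHat.log_det_le_trace_sub_card
  have hsplit :
      (SigHat⁻¹ * Sig).trace = Fintype.card n + (SigHat⁻¹ * (Sig - SigHat)).trace := by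
    rw [mul_sub, trace_sub, nonsing_inv_mul _ (isUnit_iff_ne_zero.mpr hSigHat.det_pos.ne'),
      trace_one]
    ring
  have hcov := hSigHat.trace_inv_mul_le hΔ
  have hmean := hSigHat.dotProduct_inv_mulVec_le (mu - muHat)
  have htrace := (neg_le_abs (Sig - SigHat).trace).trans
    (Sig - SigHat).abs_trace_le_sqrt_card_mul_sqrt_sum_sq
  have hdist : (mu - muHat) ⬝ᵥ (mu - muHat) = ∑ i, (mu i - muHat i) ^ 2 := by
    simp [dotProduct, sq]
  have hnorm : mu ⬝ᵥ mu = ∑ i, mu i ^ 2 := by simp [dotProduct, sq]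
  rw [hdist] at hmean
  rw [mul_add] at hcond
  simp only [trace_sub, sub_apply] at htrace
  linarith

end Matrix

section Density

variable {α : Type*} [MeasurableSpace α] {ν : Measure α} {p : α → ℝ}

lemma ae_pos_withDensity_ofReal (hpm : Measurable p) :
    ∀ᵐ x ∂ν.withDensity (fun x => ENNReal.ofReal (p x)), 0 < p x :=
  (ae_withDensity_iff hpm.ennreal_ofReal).2 <|
    ae_of_all _ fun _ hx => ENNReal.ofReal_pos.1 (pos_iff_ne_zero.2 hx)

lemma integrable_log_withDensity_ofReal (hp : ∀ x, 0 ≤ p x) (hpm : Measurable p)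
    (hent : Integrable (fun x => p x * |log (p x)|) ν) :
    Integrable (fun x => log (p x)) (ν.withDensity fun x => ENNReal.ofReal (p x)) := by
  rw [integrable_withDensity_iff hpm.ennreal_ofReal (ae_of_all _ fun _ => ENNReal.ofReal_lt_top)]
  refine hent.mono' (by fun_prop) (ae_of_all _ fun x => le_of_eq ?_)
  rw [ENNReal.toReal_ofReal (hp x), norm_mul, Real.norm_eq_abs, Real.norm_eq_abs,
    abs_of_nonneg (hp x), mul_comm]

end Density

section Moments

variable {ι : Type*} [Fintype ι] {P : Measure (ι → ℝ)}

lemma integrable_apply_mul_apply_of_sum_sq (hmom : Integrable (fun x => ∑ i, x i ^ 2) P)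
    (i j : ι) : Integrable (fun x => x i * x j) P := by
  refine hmom.mono' (by fun_prop) (ae_of_all _ fun x => ?_)
  have hi := Finset.single_le_sum (fun k _ => sq_nonneg (x k)) (Finset.mem_univ i)
  have hj := Finset.single_le_sum (fun k _ => sq_nonneg (x k)) (Finset.mem_univ j)
  rw [norm_mul, Real.norm_eq_abs, Real.norm_eq_abs]
  nlinarith [sq_nonneg (|x i| - |x j|), sq_abs (x i), sq_abs (x j)]

lemma integrable_apply_of_sum_sq [IsFiniteMeasure P]
    (hmom : Integrable (fun x => ∑ i, x i ^ 2) P) (i : ι) : Integrable (fun x => x i) P := by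
  refine ((integrable_const 1).add hmom).mono' (measurable_pi_apply i).aestronglyMeasurable
    (ae_of_all _ fun x => ?_)
  have hi := Finset.single_le_sum (fun k _ => sq_nonneg (x k)) (Finset.mem_univ i)
  rw [Real.norm_eq_abs, Pi.add_apply]
  nlinarith [sq_nonneg (|x i| - 1), sq_abs (x i)]

lemma integrable_sub_mul_sub [IsFiniteMeasure P]
    (hmom : Integrable (fun x => ∑ i, x i ^ 2) P) (a b : ℝ) (i j : ι) :
    Integrable (fun x => (x i - a) * (x j - b)) P := by
  simp_rw [sub_mul, mul_sub]
  exact ((integrable_apply_mul_apply_of_sum_sq hmom i j).sub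
    ((integrable_apply_of_sum_sq hmom i).mul_const b)).sub
    (((integrable_apply_of_sum_sq hmom j).const_mul a).sub (integrable_const _))

lemma integral_sub_mul_sub [IsProbabilityMeasure P]
    (hmom : Integrable (fun x => ∑ i, x i ^ 2) P) (a b : ℝ) (i j : ι) :
    ∫ x, (x i - a) * (x j - b) ∂P =
      ∫ x, x i * x j ∂P - (∫ x, x i ∂P) * b - (a * ∫ x, x j ∂P - a * b) := by
  have hij := integrable_apply_mul_apply_of_sum_sq hmom i j
  have hib := (integrable_apply_of_sum_sq hmom i).mul_const b
  have haj := (integrable_apply_of_sum_sq hmom j).const_mul a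
  have hfirst : Integrable (fun x => x i * x j - x i * b) P := hij.sub hib
  have hsecond : Integrable (fun x => a * x j - a * b) P := haj.sub (integrable_const _)
  simp_rw [sub_mul, mul_sub]
  rw [integral_sub hfirst hsecond, integral_sub hij hib, integral_sub haj (integrable_const _),
    integral_mul_const, integral_const_mul, integral_const]
  simp

lemma integral_sub_mul_sub_eq_add [IsProbabilityMeasure P]
    (hmom : Integrable (fun x => ∑ i, x i ^ 2) P) {mu : ι → ℝ}
    (hmu : ∀ i, mu i = ∫ x, x i ∂P)
    (a : ι → ℝ) (i j : ι) :
    ∫ x, (x i - a i) * (x j - a j) ∂P =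
      ∫ x, (x i - mu i) * (x j - mu j) ∂P + (mu i - a i) * (mu j - a j) := by
  rw [integral_sub_mul_sub hmom, integral_sub_mul_sub hmom, ← hmu, ← hmu]
  ring

lemma dotProduct_mulVec_eq_sum (A : Matrix ι ι ℝ) (v : ι → ℝ) :
    v ⬝ᵥ A *ᵥ v = ∑ i, ∑ j, A i j * (v j * v i) := by
  simp only [dotProduct, mulVec, Finset.mul_sum]
  exact Finset.sum_congr rfl fun i _ => Finset.sum_congr rfl fun j _ => by ring

lemma integrable_sub_dotProduct_mulVec_sub [IsFiniteMeasure P]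
    (hmom : Integrable (fun x => ∑ i, x i ^ 2) P) (A : Matrix ι ι ℝ) (m : ι → ℝ) :
    Integrable (fun x => (x - m) ⬝ᵥ A *ᵥ (x - m)) P := by
  simp only [dotProduct_mulVec_eq_sum, Pi.sub_apply]
  exact integrable_finsetSum _ fun i _ => integrable_finsetSum _ fun j _ =>
    (integrable_sub_mul_sub hmom _ _ j i).const_mul _

lemma integral_sub_dotProduct_mulVec_sub [IsProbabilityMeasure P]
    (hmom : Integrable (fun x => ∑ i, x i ^ 2) P) {mu : ι → ℝ}
    (hmu : ∀ i, mu i = ∫ x, x i ∂P)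
    {Sig : Matrix ι ι ℝ} (hSig : ∀ i j, Sig i j = ∫ x, (x i - mu i) * (x j - mu j) ∂P)
    (A : Matrix ι ι ℝ) (m : ι → ℝ) :
    ∫ x, (x - m) ⬝ᵥ A *ᵥ (x - m) ∂P =
      (A * Sig).trace + (mu - m) ⬝ᵥ A *ᵥ (mu - m) := by
  have hint (i j : ι) : Integrable (fun x : ι → ℝ => A i j * ((x j - m j) * (x i - m i))) P :=
    (integrable_sub_mul_sub hmom _ _ j i).const_mul _
  simp only [dotProduct_mulVec_eq_sum, Pi.sub_apply]
  simp only [integral_finsetSum _ fun i _ => integrable_finsetSum _ fun j _ => hint i j,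
    integral_finsetSum _ fun j _ => hint _ j,
    integral_const_mul, integral_sub_mul_sub_eq_add hmom hmu m, ← hSig, mul_add,
    Finset.sum_add_distrib, trace, diag, mul_apply]

end Moments

section Gaussian

variable {d : ℕ}

lemma gaussDensity_pos (m : Fin d → ℝ) {S : Matrix (Fin d) (Fin d) ℝ} (hS : 0 < S.det)
    (x : Fin d → ℝ) : 0 < gaussDensity m S x := by
  unfold gaussDensity
  positivity

lemma log_gaussDensity (m : Fin d → ℝ) {S : Matrix (Fin d) (Fin d) ℝ} (hS : 0 < S.det)
    (x : Fin d → ℝ) :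
    log (gaussDensity m S x) =
      -(d / 2 * log (2 * π)) - (log S.det + (x - m) ⬝ᵥ S⁻¹ *ᵥ (x - m)) / 2 := by
  unfold gaussDensity
  rw [log_mul (by positivity) (exp_ne_zero _), log_mul (by positivity) (by positivity),
    log_rpow (by positivity), log_rpow hS, log_exp]
  ring

variable {P : Measure (Fin d → ℝ)}

lemma integrable_log_gaussDensity [IsFiniteMeasure P]
    (hmom : Integrable (fun x => ∑ i, x i ^ 2) P) (m : Fin d → ℝ)
    {S : Matrix (Fin d) (Fin d) ℝ} (hS : 0 < S.det) :
    Integrable (fun x => log (gaussDensity m S x)) P := by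
  simp only [log_gaussDensity m hS]
  exact (integrable_const _).sub
    (((integrable_const _).add (integrable_sub_dotProduct_mulVec_sub hmom _ m)).div_const 2)

lemma integral_log_gaussDensity [IsProbabilityMeasure P]
    (hmom : Integrable (fun x => ∑ i, x i ^ 2) P) {mu : Fin d → ℝ}
    (hmu : ∀ i, mu i = ∫ x, x i ∂P) {Sig : Matrix (Fin d) (Fin d) ℝ}
    (hSig : ∀ i j, Sig i j = ∫ x, (x i - mu i) * (x j - mu j) ∂P)
    (m : Fin d → ℝ) {S : Matrix (Fin d) (Fin d) ℝ} (hS : 0 < S.det) :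
    ∫ x, log (gaussDensity m S x) ∂P = -(d / 2 * log (2 * π)) -
      (log S.det + (S⁻¹ * Sig).trace + (mu - m) ⬝ᵥ S⁻¹ *ᵥ (mu - m)) / 2 := by
  have hquad := integrable_sub_dotProduct_mulVec_sub hmom S⁻¹ m
  have hsum : Integrable (fun x => log S.det + (x - m) ⬝ᵥ S⁻¹ *ᵥ (x - m)) P :=
    (integrable_const _).add hquad
  simp only [log_gaussDensity m hS]
  rw [integral_sub (integrable_const _) (hsum.div_const 2), integral_div,
    integral_add (integrable_const _) hquad, integral_const, integral_const,
    integral_sub_dotProduct_mulVec_sub hmom hmu hSig]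
  simp only [probReal_univ, smul_eq_mul, one_mul]
  ring

end Gaussian

lemma klDivGauss_eq {d : ℕ} {p : (Fin d → ℝ) → ℝ} (hp : ∀ x, 0 ≤ p x) (hpm : Measurable p)
    {P : Measure (Fin d → ℝ)} [IsProbabilityMeasure P]
    (hP : P = volume.withDensity fun x => ENNReal.ofReal (p x))
    (hmom : Integrable (fun x => ∑ i, x i ^ 2) P)
    (hent : Integrable (fun x => p x * |log (p x)|) volume)
    {mu : Fin d → ℝ} (hmu : ∀ i, mu i = ∫ x, x i ∂P) {Sig : Matrix (Fin d) (Fin d) ℝ}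
    (hSig : ∀ i j, Sig i j = ∫ x, (x i - mu i) * (x j - mu j) ∂P)
    (m : Fin d → ℝ) {S : Matrix (Fin d) (Fin d) ℝ} (hS : 0 < S.det) :
    klDivGauss P p m S = ∫ x, log (p x) ∂P + d / 2 * log (2 * π) +
      (log S.det + (S⁻¹ * Sig).trace + (mu - m) ⬝ᵥ S⁻¹ *ᵥ (mu - m)) / 2 := by
  have hlogp : Integrable (fun x => log (p x)) P :=
    hP ▸ integrable_log_withDensity_ofReal hp hpm hent
  have hpos : ∀ᵐ x ∂P, 0 < p x := hP ▸ ae_pos_withDensity_ofReal hpm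
  rw [klDivGauss,
    integral_congr_ae (hpos.mono fun x hx => log_div hx.ne' (gaussDensity_pos m hS x).ne'),
    integral_sub hlogp (integrable_log_gaussDensity hmom m hS),
    integral_log_gaussDensity hmom hmu hSig m hS]
  ring

theorem stmt_1_general (d : ℕ)
    (p : (Fin d → ℝ) → ℝ) (hp : ∀ x, 0 ≤ p x) (hpm : Measurable p)
    (P : Measure (Fin d → ℝ)) [IsProbabilityMeasure P]
    (hP : P = volume.withDensity fun x => ENNReal.ofReal (p x))
    (hmom : Integrable (fun x => ∑ i, x i ^ 2) P)
    (hent : Integrable (fun x => p x * |Real.log (p x)|) volume)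
    (mu : Fin d → ℝ) (hmu : ∀ i, mu i = ∫ x, x i ∂P)
    (Sig : Matrix (Fin d) (Fin d) ℝ) (hSig : Sig.PosDef)
    (hSigdef : ∀ i j, Sig i j = ∫ x, (x i - mu i) * (x j - mu j) ∂P)
    (muHat : Fin d → ℝ) (SigHat : Matrix (Fin d) (Fin d) ℝ)
    (hSigHat : SigHat.PosDef)
    (hcond :
      (⨅ i, hSigHat.1.eigenvalues i)⁻¹ *
          ((∑ i, (mu i - muHat i) ^ 2) +
            ∑ i, |(hSig.1.sub hSigHat.1).eigenvalues i|) +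
        Real.sqrt d * Real.sqrt (∑ i, ∑ j, (Sig i j - SigHat i j) ^ 2) ≤
      ∑ i, mu i ^ 2) :
    klDivGauss P p muHat SigHat ≤ klDivGauss P p 0 (1 : Matrix (Fin d) (Fin d) ℝ) := by
  have hdet_one : (0 : ℝ) < (1 : Matrix (Fin d) (Fin d) ℝ).det := by simp
  have key := log_det_add_trace_inv_mul_add_le hSigHat (hSig.1.sub hSigHat.1) mu muHat
    (by simpa using hcond)
  rw [klDivGauss_eq hp hpm hP hmom hent hmu hSigdef muHat hSigHat.det_pos,
    klDivGauss_eq hp hpm hP hmom hent hmu hSigdef 0 hdet_one]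
  simp only [det_one, log_one, inv_one, one_mul, one_mulVec, sub_zero, zero_add]
  linarith

/-- Theorem 1 of the paper: under the sufficient condition
`(1/λ̂_min)·(‖μ − μ̂‖₂² + ‖Σ − Σ̂‖_N) + √d·‖Σ − Σ̂‖_F ≤ ‖μ‖₂²`, replacing the
terminal distribution `Q₀ = N(0, I_d)` by `Q̂ = N(μ̂, Σ̂)` does not increase the
KL divergence from `P`: `D_KL(P ‖ Q̂) ≤ D_KL(P ‖ Q₀)`. -/
theorem stmt_1 (d : ℕ) (hd : 0 < d)
    (p : (Fin d → ℝ) → ℝ) (hp : ∀ x, 0 ≤ p x) (hpm : Measurable p)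
    (P : Measure (Fin d → ℝ)) [IsProbabilityMeasure P]
    (hP : P = volume.withDensity fun x => ENNReal.ofReal (p x))
    (hmom : Integrable (fun x => ∑ i, x i ^ 2) P)
    (hent : Integrable (fun x => p x * |Real.log (p x)|) volume)
    (mu : Fin d → ℝ) (hmu : ∀ i, mu i = ∫ x, x i ∂P)
    (Sig : Matrix (Fin d) (Fin d) ℝ) (hSig : Sig.PosDef)
    (hSigdef : ∀ i j, Sig i j = ∫ x, (x i - mu i) * (x j - mu j) ∂P)
    (muHat : Fin d → ℝ) (SigHat : Matrix (Fin d) (Fin d) ℝ)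
    (hSigHat : SigHat.PosDef)
    (hcond :
      (⨅ i, hSigHat.1.eigenvalues i)⁻¹ *
          ((∑ i, (mu i - muHat i) ^ 2) +
            ∑ i, |(hSig.1.sub hSigHat.1).eigenvalues i|) +
        Real.sqrt d * Real.sqrt (∑ i, ∑ j, (Sig i j - SigHat i j) ^ 2) ≤
      ∑ i, mu i ^ 2) :
    klDivGauss P p muHat SigHat ≤ klDivGauss P p 0 (1 : Matrix (Fin d) (Fin d) ℝ) :=
  stmt_1_general d p hp hpm P hP hmom hent mu hmu Sig hSig hSigdef muHat SigHat hSigHat hcond
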